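/- arXiv:2409.08593 — 2 statements merged into one kernel-verified Lean document; each statement's English description precedes it below -/
import Mathlib

section
/- Let p, q, r, β, λ1, λu, λv, λw be real numbers with r ≠ 0, satisfying (i) β = λ1² + p·λu² + q·λv² + r·λw², (ii) p·λu + q·λv + r·λw = −3λ1, and (iii) p(q+r)λu² + 2λ1·p(q+r)λu + λw(−2λ1·p·r − 4p·r·λu − 4q·r·λv) + λw²(3p·r + 2q·r) − 4p·q·λu·λv + 3p·q·λv² − 2λ1·p·q·λv + 2q·r·λv² = 0. Then 3β·p + λ1²(3p − 2(q+r+9)) + 2λ1·p·λu(p+q+r) − p·λu²(p+q+r) + 2β(q+r) = 0. -/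
theorem stmt_5 (p q r beta lam1 lamu lamv lamw : ℝ) (hr : r ≠ 0)
    (hbeta : beta = lam1 ^ 2 + p * lamu ^ 2 + q * lamv ^ 2 + r * lamw ^ 2)
    (htrace : p * lamu + q * lamv + r * lamw = -3 * lam1)
    (hn1 : p * (q + r) * lamu ^ 2 + 2 * lam1 * p * (q + r) * lamu
        + lamw * (-2 * lam1 * p * r - 4 * p * r * lamu - 4 * q * r * lamv)
        + lamw ^ 2 * (3 * p * r + 2 * q * r)
        - 4 * p * q * lamu * lamv + 3 * p * q * lamv ^ 2
        - 2 * lam1 * p * q * lamv + 2 * q * r * lamv ^ 2 = 0) :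
    3 * beta * p + lam1 ^ 2 * (3 * p - 2 * (q + r + 9))
      + 2 * lam1 * p * lamu * (p + q + r) - p * lamu ^ 2 * (p + q + r)
      + 2 * beta * (q + r) = 0 := by
  linear_combination hn1 + (2*(p*lamu + q*lamv + r*lamw + 3*lam1) + (2*p - 12)*lam1) * htrace + (3*p + 2*q + 2*r) * hbeta
end

section
/- Let q, r, λ1, λu, λv, λw, Au, Av, Aw, x, y be real numbers with q > 0, r > 0, λu ≠ λv and λu ≠ λw. Suppose (x, y) ≠ (0, 0), q(λv−λu)²·x + r(λw−λu)²·y = 0, and r·(2(λu−λ1)Au + (2λ1+λu−3λw)Aw)·(λw−λu)·y + q·(2(λu−λ1)Au + (2λ1+λu−3λv)Av)·(λv−λu)·x = 0. Then 2(λ1−λu)(λv−λw)·Au + (2λ1+λu−3λw)(λu−λv)·Aw − (2λ1+λu−3λv)(λu−λw)·Av = 0. -/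
theorem stmt_18 (q r lam1 lamu lamv lamw Au Av Aw x y : ℝ)
    (hq : q > 0) (hr : r > 0) (huv : lamu ≠ lamv) (huw : lamu ≠ lamw)
    (hxy : ¬(x = 0 ∧ y = 0))
    (h1 : q * (lamv - lamu) ^ 2 * x + r * (lamw - lamu) ^ 2 * y = 0)
    (h2 : r * (2 * (lamu - lam1) * Au + (2 * lam1 + lamu - 3 * lamw) * Aw)
          * (lamw - lamu) * y
        + q * (2 * (lamu - lam1) * Au + (2 * lam1 + lamu - 3 * lamv) * Av)
          * (lamv - lamu) * x = 0) :
    2 * (lam1 - lamu) * (lamv - lamw) * Au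
      + (2 * lam1 + lamu - 3 * lamw) * (lamu - lamv) * Aw
      - (2 * lam1 + lamu - 3 * lamv) * (lamu - lamw) * Av = 0 := by
  set Ev := 2 * (lamu - lam1) * Au + (2 * lam1 + lamu - 3 * lamv) * Av with hEv
  set Ew := 2 * (lamu - lam1) * Au + (2 * lam1 + lamu - 3 * lamw) * Aw with hEw
  set D := q * (lamv - lamu) ^ 2 * (r * Ew * (lamw - lamu))
      - r * (lamw - lamu) ^ 2 * (q * Ev * (lamv - lamu)) with hD
  have hDx : D * x = 0 := by
    linear_combination (r * Ew * (lamw - lamu)) * h1 - (r * (lamw - lamu) ^ 2) * h2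
  have hDy : D * y = 0 := by
    linear_combination (q * (lamv - lamu) ^ 2) * h2 - (q * Ev * (lamv - lamu)) * h1
  have hD0 : D = 0 := by
    rcases not_and_or.mp hxy with hx | hy
    · exact (mul_eq_zero.mp hDx).resolve_right hx
    · exact (mul_eq_zero.mp hDy).resolve_right hy
  have hvu : lamv - lamu ≠ 0 := sub_ne_zero.mpr (Ne.symm huv)
  have hwu : lamw - lamu ≠ 0 := sub_ne_zero.mpr (Ne.symm huw)
  have hf : q * r * (lamv - lamu) * (lamw - lamu) ≠ 0 :=
    mul_ne_zero (mul_ne_zero (mul_ne_zero hq.ne' hr.ne') hvu) hwu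
  have key : q * r * (lamv - lamu) * (lamw - lamu) *
      (2 * (lam1 - lamu) * (lamv - lamw) * Au
      + (2 * lam1 + lamu - 3 * lamw) * (lamu - lamv) * Aw
      - (2 * lam1 + lamu - 3 * lamv) * (lamu - lamw) * Av) = 0 := by
    rw [hD, hEv, hEw] at hD0
    linear_combination -hD0
  exact (mul_eq_zero.mp key).resolve_left hf
end
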